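/- RD(1) is equivalent to RD(7): there exist C, D with ‖f‖_* ≤ C R^D ‖f‖₂ for all f ∈ CG supported on the ball B_R = {ℓ ≤ R} if and only if there exist C, D such that for all R ∈ ℕ and all unit vectors ξ, η ∈ ℓ²(G), Σ_{γ ∈ B_R} |⟨γ·ξ, η⟩|² ≤ C R^{2D}, with the same exponent D in both directions. -/

import Mathlib

open scoped BigOperators

/-- The ℓ²-norm of a function on a discrete set. -/
noncomputable def l2norm {G : Type*} (g : G → ℂ) : ℝ :=
  Real.sqrt (∑' γ, ‖g γ‖ ^ 2)

/-- Left convolution of a finitely supported function with an arbitrary function. -/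
noncomputable def conv {G : Type*} [Group G] (f : G →₀ ℂ) (ξ : G → ℂ) : G → ℂ :=
  fun γ => ∑ μ ∈ f.support, f μ * ξ (μ⁻¹ * γ)

/-- The operator norm of `f ∈ ℂG` acting by left convolution on `ℓ²(G)`. -/
noncomputable def opNorm {G : Type*} [Group G] (f : G →₀ ℂ) : ℝ :=
  sSup {x : ℝ | ∃ ξ : G → ℂ, Summable (fun γ => ‖ξ γ‖ ^ 2) ∧ l2norm ξ = 1 ∧
    x = l2norm (conv f ξ)}


/-- The coefficient `⟨γ·ξ, η⟩` of the left regular representation. -/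
noncomputable def coeffRep {G : Type*} [Group G] (ξ η : G → ℂ) (γ : G) : ℂ :=
  ∑' g, ξ (γ⁻¹ * g) * (starRingEnd ℂ) (η g)

section Aux

variable {G : Type*} [Group G]

lemma memℓp_two_iff' (ξ : G → ℂ) :
    Memℓp ξ 2 ↔ Summable (fun γ => ‖ξ γ‖ ^ 2) := by
  rw [memℓp_gen_iff (p := 2) (by norm_num)]
  norm_num

/-- Package a square-summable function as an element of `lp _ 2`. -/
noncomputable def toLp (ξ : G → ℂ) (h : Summable fun γ => ‖ξ γ‖ ^ 2) :
    lp (fun _ : G => ℂ) 2 := ⟨ξ, (memℓp_two_iff' ξ).2 h⟩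

@[simp] lemma coe_toLp (ξ : G → ℂ) (h : Summable fun γ => ‖ξ γ‖ ^ 2) :
    ⇑(toLp ξ h) = ξ := rfl

lemma l2norm_eq_norm (u : lp (fun _ : G => ℂ) 2) : l2norm ⇑u = ‖u‖ := by
  rw [l2norm, lp.norm_eq_tsum_rpow (by norm_num) u, Real.sqrt_eq_rpow]
  norm_num

lemma transl_summable (μ : G) {ξ : G → ℂ} (h : Summable fun γ => ‖ξ γ‖ ^ 2) :
    Summable fun γ => ‖ξ (μ⁻¹ * γ)‖ ^ 2 :=
  ((Equiv.mulLeft μ⁻¹).summable_iff (f := fun γ => ‖ξ γ‖ ^ 2)).2 h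

lemma l2norm_transl (μ : G) (ξ : G → ℂ) :
    l2norm (fun γ => ξ (μ⁻¹ * γ)) = l2norm ξ := by
  unfold l2norm
  congr 1
  exact Equiv.tsum_eq (Equiv.mulLeft μ⁻¹) (fun γ => ‖ξ γ‖ ^ 2)

/-- The convolution `conv f ξ` as an element of `lp _ 2`. -/
noncomputable def convLp (f : G →₀ ℂ) (ξ : G → ℂ) (h : Summable fun γ => ‖ξ γ‖ ^ 2) :
    lp (fun _ : G => ℂ) 2 :=
  ∑ μ ∈ f.support, f μ • toLp (fun γ => ξ (μ⁻¹ * γ)) (transl_summable μ h)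

lemma coe_convLp (f : G →₀ ℂ) (ξ : G → ℂ) (h : Summable fun γ => ‖ξ γ‖ ^ 2) :
    ⇑(convLp f ξ h) = conv f ξ := by
  funext γ
  rw [convLp, lp.coeFn_sum]
  simp [conv, lp.coeFn_smul]

lemma coeffRep_eq_inner (ξ : G → ℂ) (hξ : Summable fun γ => ‖ξ γ‖ ^ 2)
    (v : lp (fun _ : G => ℂ) 2) (γ : G) :
    coeffRep ξ ⇑v γ =
      inner ℂ v (toLp (fun g => ξ (γ⁻¹ * g)) (transl_summable γ hξ)) := by
  rw [lp.inner_eq_tsum, coeffRep]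
  exact tsum_congr fun g => by simp only [coe_toLp, RCLike.inner_apply]

lemma inner_convLp (f : G →₀ ℂ) (ξ : G → ℂ) (h : Summable fun γ => ‖ξ γ‖ ^ 2)
    (v : lp (fun _ : G => ℂ) 2) :
    (inner ℂ v (convLp f ξ h) : ℂ) = ∑ μ ∈ f.support, f μ * coeffRep ξ ⇑v μ := by
  rw [convLp, inner_sum]
  exact Finset.sum_congr rfl fun μ _ => by
    rw [inner_smul_right, coeffRep_eq_inner ξ h v μ]

lemma norm_convLp_le (f : G →₀ ℂ) (ξ : G → ℂ) (h : Summable fun γ => ‖ξ γ‖ ^ 2)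
    (hξ1 : l2norm ξ = 1) :
    ‖convLp f ξ h‖ ≤ ∑ μ ∈ f.support, ‖f μ‖ := by
  refine (norm_sum_le _ _).trans (Finset.sum_le_sum fun μ _ => ?_)
  rw [norm_smul]
  have h1 : ‖toLp (fun γ => ξ (μ⁻¹ * γ)) (transl_summable μ h)‖ = 1 := by
    rw [← l2norm_eq_norm, coe_toLp, l2norm_transl, hξ1]
  rw [h1, mul_one]

lemma l2norm_finsupp (f : G →₀ ℂ) :
    l2norm (f : G → ℂ) = Real.sqrt (∑ γ ∈ f.support, ‖f γ‖ ^ 2) := by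
  rw [l2norm, tsum_eq_sum (s := f.support)]
  intro γ hγ
  simp [Finsupp.notMem_support_iff.1 hγ]

end Aux


/-- RD(1) is equivalent to RD(7), with the same exponent `D` in both directions:
`‖f‖_* ≤ C R^D ‖f‖₂` for `f` supported on `B_R = {ℓ ≤ R}` iff for all `R` and all unit
vectors `ξ, η ∈ ℓ²(G)`, `Σ_{γ ∈ B_R} |⟨γ·ξ, η⟩|² ≤ C R^{2D}` (all finite partial sums
over `B_R` bounded). -/
theorem RD1_iff_RD7 {G : Type*} [Group G] [Countable G]
    (ℓ : G → ℝ) (hnonneg : ∀ γ, 0 ≤ ℓ γ) (hone : ℓ 1 = 0)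
    (hsymmlen : ∀ γ : G, ℓ γ⁻¹ = ℓ γ)
    (hsub : ∀ γ μ : G, ℓ (γ * μ) ≤ ℓ γ + ℓ μ) :
    (∀ C D : ℝ, 0 < C →
      (∀ R : ℕ, 1 ≤ R → ∀ f : G →₀ ℂ, (∀ γ ∈ f.support, ℓ γ ≤ R) →
        opNorm f ≤ C * (R : ℝ) ^ D * l2norm (f : G → ℂ)) →
      ∃ C' : ℝ, 0 < C' ∧ ∀ R : ℕ, 1 ≤ R → ∀ ξ η : G → ℂ,
        Summable (fun γ => ‖ξ γ‖ ^ 2) → Summable (fun γ => ‖η γ‖ ^ 2) →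
        l2norm ξ = 1 → l2norm η = 1 →
        ∀ F : Finset G, (∀ γ ∈ F, ℓ γ ≤ R) →
          ∑ γ ∈ F, ‖coeffRep ξ η γ‖ ^ 2 ≤ C' * (R : ℝ) ^ (2 * D)) ∧
    (∀ C D : ℝ, 0 < C →
      (∀ R : ℕ, 1 ≤ R → ∀ ξ η : G → ℂ,
        Summable (fun γ => ‖ξ γ‖ ^ 2) → Summable (fun γ => ‖η γ‖ ^ 2) →
        l2norm ξ = 1 → l2norm η = 1 →
        ∀ F : Finset G, (∀ γ ∈ F, ℓ γ ≤ R) →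
          ∑ γ ∈ F, ‖coeffRep ξ η γ‖ ^ 2 ≤ C * (R : ℝ) ^ (2 * D)) →
      ∃ C' : ℝ, 0 < C' ∧ ∀ R : ℕ, 1 ≤ R → ∀ f : G →₀ ℂ,
        (∀ γ ∈ f.support, ℓ γ ≤ R) →
        opNorm f ≤ C' * (R : ℝ) ^ D * l2norm (f : G → ℂ)) := by
  constructor
  · -- RD(1) → RD(7)
    intro C D hC hRD
    refine ⟨C ^ 2, by positivity, ?_⟩
    intro R hR ξ η hξ hη hξ1 hη1 F hF
    classical
    have hRpos : (0 : ℝ) < (R : ℝ) := by exact_mod_cast Nat.lt_of_lt_of_le Nat.zero_lt_one hR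
    set c : G → ℂ := coeffRep ξ η with hc
    set f : G →₀ ℂ := Finsupp.indicator F (fun γ _ => (starRingEnd ℂ) (c γ)) with hfdef
    have hfsupp : f.support ⊆ F := by
      intro γ hγ
      exact_mod_cast Finsupp.support_indicator_subset _ _ hγ
    have hfval : ∀ γ ∈ F, f γ = (starRingEnd ℂ) (c γ) := fun γ hγ =>
      Finsupp.indicator_of_mem hγ _
    set S : ℝ := ∑ γ ∈ F, ‖c γ‖ ^ 2 with hS
    have hS0 : 0 ≤ S := Finset.sum_nonneg fun _ _ => by positivity
    have hfl2 : l2norm (f : G → ℂ) ≤ Real.sqrt S := by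
      rw [l2norm_finsupp]
      apply Real.sqrt_le_sqrt
      rw [hS]
      refine le_trans (le_of_eq ?_) (Finset.sum_le_sum_of_subset_of_nonneg hfsupp
        (fun _ _ _ => by positivity))
      refine Finset.sum_congr rfl fun γ hγ => ?_
      rw [hfval γ (hfsupp hγ)]
      simp
    have hsum : ∑ μ ∈ f.support, f μ * c μ = (S : ℂ) := by
      rw [Finset.sum_subset hfsupp (fun γ _ hns => by
        simp [Finsupp.notMem_support_iff.1 hns])]
      rw [hS]
      push_cast
      refine Finset.sum_congr rfl fun γ hγ => ?_
      rw [hfval γ hγ, mul_comm, Complex.mul_conj']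
    -- the inner product identity
    have hηnorm : ‖toLp η hη‖ = 1 := by rw [← l2norm_eq_norm, coe_toLp, hη1]
    have hinner : (inner ℂ (toLp η hη) (convLp f ξ hξ) : ℂ) = (S : ℂ) := by
      rw [inner_convLp]
      simp only [coe_toLp, ← hc]
      exact hsum
    have hSle : S ≤ ‖convLp f ξ hξ‖ := by
      have h1 : S = ‖(S : ℂ)‖ := by
        rw [Complex.norm_real]
        exact (Real.norm_of_nonneg hS0).symm
      calc S = ‖(inner ℂ (toLp η hη) (convLp f ξ hξ) : ℂ)‖ := by rw [hinner, ← h1]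
        _ ≤ ‖toLp η hη‖ * ‖convLp f ξ hξ‖ := norm_inner_le_norm _ _
        _ = ‖convLp f ξ hξ‖ := by rw [hηnorm, one_mul]
    -- bound via opNorm
    have hbdd : BddAbove {x : ℝ | ∃ ξ' : G → ℂ, Summable (fun γ => ‖ξ' γ‖ ^ 2) ∧
        l2norm ξ' = 1 ∧ x = l2norm (conv f ξ')} := by
      refine ⟨∑ μ ∈ f.support, ‖f μ‖, ?_⟩
      rintro x ⟨ξ', hξ', h1', rfl⟩
      rw [← coe_convLp f ξ' hξ', l2norm_eq_norm]
      exact norm_convLp_le f ξ' hξ' h1'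
    have hle1 : l2norm (conv f ξ) ≤ opNorm f :=
      le_csSup hbdd ⟨ξ, hξ, hξ1, rfl⟩
    have hle2 : opNorm f ≤ C * (R : ℝ) ^ D * Real.sqrt S := by
      refine le_trans (hRD R hR f (fun γ hγ => hF γ (hfsupp hγ))) ?_
      exact mul_le_mul_of_nonneg_left hfl2 (by positivity)
    have hkey : S ≤ C * (R : ℝ) ^ D * Real.sqrt S := by
      calc S ≤ ‖convLp f ξ hξ‖ := hSle
        _ = l2norm (conv f ξ) := by rw [← coe_convLp f ξ hξ, l2norm_eq_norm]
        _ ≤ opNorm f := hle1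
        _ ≤ C * (R : ℝ) ^ D * Real.sqrt S := hle2
    -- conclude
    have hpow : (R : ℝ) ^ (2 * D) = ((R : ℝ) ^ D) ^ 2 := by
      rw [two_mul, Real.rpow_add hRpos, sq]
    rcases eq_or_lt_of_le hS0 with h0 | hSpos
    · rw [← h0, hpow]; positivity
    · have hsq : Real.sqrt S ≤ C * (R : ℝ) ^ D := by
        have hs : 0 < Real.sqrt S := Real.sqrt_pos.2 hSpos
        have h' : Real.sqrt S * Real.sqrt S ≤ C * (R : ℝ) ^ D * Real.sqrt S := by
          rw [Real.mul_self_sqrt hS0]; exact hkey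
        exact le_of_mul_le_mul_right h' hs
      calc S = Real.sqrt S ^ 2 := (Real.sq_sqrt hS0).symm
        _ ≤ (C * (R : ℝ) ^ D) ^ 2 := by
            apply pow_le_pow_left₀ (Real.sqrt_nonneg _) hsq
        _ = C ^ 2 * (R : ℝ) ^ (2 * D) := by rw [hpow]; ring
  · -- RD(7) → RD(1)
    intro C D hC hRD
    refine ⟨Real.sqrt C, Real.sqrt_pos.2 hC, ?_⟩
    intro R hR f hf
    have hRpos : (0 : ℝ) < (R : ℝ) := by exact_mod_cast Nat.lt_of_lt_of_le Nat.zero_lt_one hR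
    have hl2nonneg : 0 ≤ l2norm (f : G → ℂ) := Real.sqrt_nonneg _
    have hbound0 : 0 ≤ Real.sqrt C * (R : ℝ) ^ D * l2norm (f : G → ℂ) := by positivity
    refine Real.sSup_le ?_ hbound0
    rintro x ⟨ξ, hξ, hξ1, rfl⟩
    rw [← coe_convLp f ξ hξ, l2norm_eq_norm]
    set u := convLp f ξ hξ with hu_def
    by_cases hu : ‖u‖ = 0
    · rw [hu]; exact hbound0
    have hupos : 0 < ‖u‖ := lt_of_le_of_ne (norm_nonneg u) (Ne.symm hu)
    set η : lp (fun _ : G => ℂ) 2 := ((‖u‖ : ℂ))⁻¹ • u with hη_def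
    have hηn : ‖η‖ = 1 := by
      rw [hη_def, norm_smul, norm_inv, Complex.norm_real, Real.norm_eq_abs,
        abs_of_nonneg (norm_nonneg u)]
      field_simp
    have hηsum : Summable fun γ => ‖(⇑η : G → ℂ) γ‖ ^ 2 := (memℓp_two_iff' _).1 (lp.memℓp η)
    have hη1 : l2norm ⇑η = 1 := by rw [l2norm_eq_norm, hηn]
    have h7 := hRD R hR ξ ⇑η hξ hηsum hξ1 hη1 f.support hf
    have hinner : (inner ℂ η u : ℂ) = ∑ μ ∈ f.support, f μ * coeffRep ξ ⇑η μ :=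
      inner_convLp f ξ hξ η
    have hne : ((‖u‖ : ℝ) : ℂ) ≠ 0 := by exact_mod_cast hu
    have hval : (inner ℂ η u : ℂ) = (‖u‖ : ℂ) := by
      rw [hη_def, inner_smul_left, inner_self_eq_norm_sq_to_K]
      rw [map_inv₀, Complex.conj_ofReal, sq]
      exact inv_mul_cancel_left₀ hne _
    have hCS : ‖u‖ ≤ l2norm (f : G → ℂ) * (Real.sqrt C * (R : ℝ) ^ D) := by
      have h1 : ‖u‖ = ‖(inner ℂ η u : ℂ)‖ := by
        rw [hval, Complex.norm_real]
        exact (Real.norm_of_nonneg (norm_nonneg u)).symm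
      have h2 : ‖(inner ℂ η u : ℂ)‖ ≤ ∑ μ ∈ f.support, ‖f μ‖ * ‖coeffRep ξ ⇑η μ‖ := by
        rw [hinner]
        refine (norm_sum_le _ _).trans (Finset.sum_le_sum fun μ _ => ?_)
        rw [norm_mul]
      have h3 : ∑ μ ∈ f.support, ‖f μ‖ * ‖coeffRep ξ ⇑η μ‖ ≤
          Real.sqrt (∑ μ ∈ f.support, ‖f μ‖ ^ 2) *
          Real.sqrt (∑ μ ∈ f.support, ‖coeffRep ξ ⇑η μ‖ ^ 2) :=
        Real.sum_mul_le_sqrt_mul_sqrt _ _ _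
      have h4 : Real.sqrt (∑ μ ∈ f.support, ‖coeffRep ξ ⇑η μ‖ ^ 2) ≤
          Real.sqrt C * (R : ℝ) ^ D := by
        have hpow : C * (R : ℝ) ^ (2 * D) = (Real.sqrt C * (R : ℝ) ^ D) ^ 2 := by
          rw [mul_pow, Real.sq_sqrt hC.le, two_mul, Real.rpow_add hRpos, sq]
        refine Real.sqrt_le_sqrt h7 |>.trans ?_
        rw [hpow, Real.sqrt_sq (by positivity)]
      calc ‖u‖ = ‖(inner ℂ η u : ℂ)‖ := h1
        _ ≤ ∑ μ ∈ f.support, ‖f μ‖ * ‖coeffRep ξ ⇑η μ‖ := h2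
        _ ≤ _ := h3
        _ ≤ l2norm (f : G → ℂ) * (Real.sqrt C * (R : ℝ) ^ D) := by
            rw [l2norm_finsupp]
            exact mul_le_mul_of_nonneg_left h4 (Real.sqrt_nonneg _)
    calc ‖u‖ ≤ l2norm (f : G → ℂ) * (Real.sqrt C * (R : ℝ) ^ D) := hCS
      _ = Real.sqrt C * (R : ℝ) ^ D * l2norm (f : G → ℂ) := by ring
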